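/- Let A be an n-dimensional nilpotent left Leibniz algebra over ℂ with dim A² = n − k, dim Leib(A) = 1, dim A³ = t, and suppose Leib(A) ⊆ A³. Then n ≤ t + (k² + k)/2. -/

import Mathlib

/-!
Modulo `A³`, the bracket induces a bilinear map `A/A² × A/A² → A/A³`: `[A, A²] ⊆ A³` by
definition and `[A², A] ⊆ A³` by the Leibniz identity. Because `Leib(A) ⊆ A³` this map is
alternating, so it factors through `⋀²(A/A²)`; its image is `A²/A³`, whence
`dim A²/A³ ≤ C(q, 2)` with `q = dim A/A² ≤ k`, and `n = q + dim A²/A³ + t ≤ t + C(k + 1, 2)`.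
-/

/-- The left Leibniz identity for a bilinear bracket:
`[a,[b,c]] = [[a,b],c] + [b,[a,c]]`. -/
def IsLeibnizBracket {K A : Type*} [CommRing K] [AddCommGroup A] [Module K A]
    (br : A →ₗ[K] A →ₗ[K] A) : Prop :=
  ∀ a b c : A, br a (br b c) = br (br a b) c + br b (br a c)

/-- The span of all brackets `[s,t]` with `s ∈ S`, `t ∈ T`. -/
def bracketSpan {K A : Type*} [CommRing K] [AddCommGroup A] [Module K A]
    (br : A →ₗ[K] A →ₗ[K] A) (S T : Submodule K A) : Submodule K A :=
  Submodule.span K {x | ∃ s ∈ S, ∃ t ∈ T, br s t = x}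

/-- Lower central series: `lcs br n = A^(n+1)`, i.e. `lcs br 0 = A¹ = A` and
`lcs br (n+1) = [A, lcs br n]`. -/
def lcs {K A : Type*} [CommRing K] [AddCommGroup A] [Module K A]
    (br : A →ₗ[K] A →ₗ[K] A) : ℕ → Submodule K A
  | 0 => ⊤
  | n + 1 => bracketSpan br ⊤ (lcs br n)

/-- `Leib(A)`: the span of all squares `[a,a]`. -/
def leibIdeal {K A : Type*} [CommRing K] [AddCommGroup A] [Module K A]
    (br : A →ₗ[K] A →ₗ[K] A) : Submodule K A :=
  Submodule.span K {x | ∃ a : A, br a a = x}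

/-- The center `Z(A) = {x : [a,x] = 0 = [x,a] for all a}`. -/
def leibnizCenter {K A : Type*} [CommRing K] [AddCommGroup A] [Module K A]
    (br : A →ₗ[K] A →ₗ[K] A) : Submodule K A where
  carrier := {x | ∀ a : A, br a x = 0 ∧ br x a = 0}
  add_mem' := by
    intro x y hx hy a
    constructor <;>
      simp [map_add, LinearMap.add_apply, (hx a).1, (hx a).2, (hy a).1, (hy a).2]
  zero_mem' := by
    intro a
    constructor <;> simp
  smul_mem' := by
    intro c x hx a
    constructor <;>
      simp [map_smul, LinearMap.smul_apply, (hx a).1, (hx a).2]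

/-- Two-sided ideal of a Leibniz algebra. -/
def IsLeibnizIdeal {K A : Type*} [CommRing K] [AddCommGroup A] [Module K A]
    (br : A →ₗ[K] A →ₗ[K] A) (I : Submodule K A) : Prop :=
  ∀ a : A, ∀ x ∈ I, br a x ∈ I ∧ br x a ∈ I

namespace LinearMap

variable {R M N : Type*} [CommRing R] [AddCommGroup M] [AddCommGroup N] [Module R M] [Module R N]

def alternatingMapFinTwo (f : M →ₗ[R] M →ₗ[R] N) (hf : ∀ x, f x x = 0) :
    M [⋀^Fin 2]→ₗ[R] N where
  toFun v := f (v 0) (v 1)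
  map_update_add' v i x y := by
    fin_cases i <;> simp
  map_update_smul' v i c x := by
    fin_cases i <;> simp
  map_eq_zero_of_eq' v i j hij hne := by
    fin_cases i <;> fin_cases j <;> simp_all

@[simp]
theorem alternatingMapFinTwo_apply (f : M →ₗ[R] M →ₗ[R] N) (hf : ∀ x, f x x = 0)
    (v : Fin 2 → M) : f.alternatingMapFinTwo hf v = f (v 0) (v 1) :=
  rfl

end LinearMap

theorem Submodule.finrank_map₂_top_le_choose_two {K V W : Type*} [Field K] [AddCommGroup V]
    [AddCommGroup W] [Module K V] [Module K W] [FiniteDimensional K V]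
    (f : V →ₗ[K] V →ₗ[K] W) (hf : ∀ x, f x x = 0) :
    Module.finrank K (map₂ f ⊤ ⊤) ≤ (Module.finrank K V).choose 2 := by
  set F := exteriorPower.alternatingMapLinearEquiv (f.alternatingMapFinTwo hf)
  have hle : map₂ f ⊤ ⊤ ≤ LinearMap.range F := map₂_le.2 fun x _ y _ =>
    ⟨exteriorPower.ιMulti K 2 ![x, y], by simp [F]⟩
  calc Module.finrank K (map₂ f ⊤ ⊤) ≤ Module.finrank K (LinearMap.range F) := finrank_mono hle
    _ ≤ Module.finrank K (⋀[K]^2 V) := LinearMap.finrank_range_le F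
    _ = (Module.finrank K V).choose 2 := exteriorPower.finrank_eq K 2

theorem Submodule.finrank_map_mkQ_add_finrank {K V : Type*} [Field K] [AddCommGroup V]
    [Module K V] [FiniteDimensional K V] {p q : Submodule K V} (h : q ≤ p) :
    Module.finrank K (p.map q.mkQ) + Module.finrank K q = Module.finrank K p := by
  have hrange : LinearMap.range (q.mkQ ∘ₗ p.subtype) = p.map q.mkQ := by
    rw [LinearMap.range_comp, range_subtype]
  have hker : LinearMap.ker (q.mkQ ∘ₗ p.subtype) = q.comap p.subtype := by
    rw [LinearMap.ker_comp, ker_mkQ]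
  rw [← hrange, ← (comapSubtypeEquivOfLe h).finrank_eq, ← hker]
  exact LinearMap.finrank_range_add_finrank_ker _

section Leibniz

variable {K A : Type*} [CommRing K] [AddCommGroup A] [Module K A] (br : A →ₗ[K] A →ₗ[K] A)

theorem bracketSpan_eq_map₂ (S T : Submodule K A) : bracketSpan br S T = Submodule.map₂ br S T :=
  (Submodule.map₂_eq_span_image2 br S T).symm

theorem lcs_succ (m : ℕ) : lcs br (m + 1) = Submodule.map₂ br ⊤ (lcs br m) :=
  bracketSpan_eq_map₂ br ⊤ (lcs br m)

theorem bracket_mem_lcs_succ (a : A) {m : ℕ} {x : A} (hx : x ∈ lcs br m) :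
    br a x ∈ lcs br (m + 1) := by
  rw [lcs_succ]
  exact Submodule.apply_mem_map₂ br Submodule.mem_top hx

theorem lcs_succ_le (m : ℕ) : lcs br (m + 1) ≤ lcs br m := by
  induction m with
  | zero => exact le_top
  | succ m ih =>
    exact (lcs_succ br (m + 1)).trans_le <|
      (Submodule.map₂_le_map₂_right ih).trans_eq (lcs_succ br m).symm

variable {br}

theorem bracket_mem_lcs_two_of_mem_lcs_one (hbr : IsLeibnizBracket br) {x : A}
    (hx : x ∈ lcs br 1) (b : A) : br x b ∈ lcs br 2 := by
  suffices lcs br 1 ≤ (lcs br 2).comap (br.flip b) from this hx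
  rw [lcs_succ, Submodule.map₂_le]
  intro u _ v _
  rw [Submodule.mem_comap, LinearMap.flip_apply, eq_sub_of_add_eq (hbr u v b).symm]
  exact sub_mem (bracket_mem_lcs_succ br u (bracket_mem_lcs_succ br v Submodule.mem_top))
    (bracket_mem_lcs_succ br v (bracket_mem_lcs_succ br u Submodule.mem_top))

end Leibniz

theorem finrank_lcs_one_le_of_leibIdeal_le_lcs_two {K A : Type*} [Field K] [AddCommGroup A]
    [Module K A] [FiniteDimensional K A] {br : A →ₗ[K] A →ₗ[K] A} (hbr : IsLeibnizBracket br)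
    (hsub : leibIdeal br ≤ lcs br 2) :
    Module.finrank K (lcs br 1) ≤
      Module.finrank K (lcs br 2) + (Module.finrank K (A ⧸ lcs br 1)).choose 2 := by
  set L₁ := lcs br 1
  set L₂ := lcs br 2
  set β := br.compr₂ L₂.mkQ
  have hleft : L₁ ≤ LinearMap.ker β := fun x hx => LinearMap.ext fun b =>
    (Submodule.Quotient.mk_eq_zero L₂).2 (bracket_mem_lcs_two_of_mem_lcs_one hbr hx b)
  have hright : L₁ ≤ LinearMap.ker β.flip := fun y hy => LinearMap.ext fun a =>
    (Submodule.Quotient.mk_eq_zero L₂).2 (bracket_mem_lcs_succ br a hy)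
  set γ := β.liftQ₂ L₁ L₁ hleft hright
  have hγ : ∀ x, γ x x = 0 := by
    rintro ⟨x⟩
    exact (Submodule.Quotient.mk_eq_zero L₂).2 (hsub (Submodule.subset_span ⟨x, rfl⟩))
  have himage : L₁.map L₂.mkQ = Submodule.map₂ γ ⊤ ⊤ := by
    rw [← L₁.range_mkQ, LinearMap.range_eq_map, Submodule.map₂_map_map]
    have hβ : γ.compl₁₂ L₁.mkQ L₁.mkQ = β := LinearMap.ext₂ fun _ _ => rfl
    rw [hβ, ← Submodule.map_map₂]
    exact congrArg _ (lcs_succ br 0)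
  have hrank := Submodule.finrank_map_mkQ_add_finrank (p := L₁) (q := L₂) (lcs_succ_le br 1)
  have hchoose := Submodule.finrank_map₂_top_le_choose_two γ hγ
  rw [← himage] at hchoose
  omega

theorem dim_le_of_derived_codim_leib_in_third_general
    {A : Type*} [AddCommGroup A] [Module ℂ A] [FiniteDimensional ℂ A]
    (br : A →ₗ[ℂ] A →ₗ[ℂ] A) (hbr : IsLeibnizBracket br)
    (n k t : ℕ)
    (hdim : Module.finrank ℂ A = n)
    (hA2 : Module.finrank ℂ ↥(lcs br 1) = n - k)
    (hA3 : Module.finrank ℂ ↥(lcs br 2) = t)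
    (hsub : leibIdeal br ≤ lcs br 2) :
    2 * n ≤ 2 * t + k ^ 2 + k := by
  have hderived := finrank_lcs_one_le_of_leibIdeal_le_lcs_two hbr hsub
  rw [hA2, hA3] at hderived
  set q := Module.finrank ℂ (A ⧸ lcs br 1)
  have hq : q + (n - k) = n := by
    rw [← hA2, ← hdim]
    exact Submodule.finrank_quotient_add_finrank _
  have hchoose : (q + 1).choose 2 ≤ (k + 1).choose 2 := Nat.choose_le_choose 2 (by omega)
  have hq_succ : (q + 1).choose 2 = q + q.choose 2 := by
    rw [Nat.choose_succ_succ', Nat.choose_one_right]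
  have hk_succ : (k + 1).choose 2 * 2 = k ^ 2 + k := by
    rw [← Nat.add_one_mul_choose_eq, Nat.choose_one_right]
    ring
  omega

/-- If `A` is an `n`-dimensional nilpotent left Leibniz algebra over `ℂ` with
`dim A² = n - k`, `dim Leib(A) = 1`, `dim A³ = t` and `Leib(A) ⊆ A³`, then
`n ≤ t + (k² + k)/2`. -/
theorem dim_le_of_derived_codim_leib_in_third
    {A : Type*} [AddCommGroup A] [Module ℂ A] [FiniteDimensional ℂ A]
    (br : A →ₗ[ℂ] A →ₗ[ℂ] A) (hbr : IsLeibnizBracket br)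
    (hnil : ∃ m : ℕ, lcs br m = ⊥)
    (n k t : ℕ) (hk : k ≤ n)
    (hdim : Module.finrank ℂ A = n)
    (hA2 : Module.finrank ℂ ↥(lcs br 1) = n - k)
    (hleib : Module.finrank ℂ ↥(leibIdeal br) = 1)
    (hA3 : Module.finrank ℂ ↥(lcs br 2) = t)
    (hsub : leibIdeal br ≤ lcs br 2) :
    2 * n ≤ 2 * t + k ^ 2 + k :=
  dim_le_of_derived_codim_leib_in_third_general br hbr n k t hdim hA2 hA3 hsub
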